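/- Let h : Z_2^{n-1} → Z_2, g(x) = x_1 ⊕ ⋯ ⊕ x_{n-1} ⊕ b, and f = (h | h ⊕ g) on Z_2^n. If x' ∈ Z_2^{n-1} is a nonzero linear structure of h with even Hamming weight, then (0-extension) (x', 0) is a linear structure of f, and hence Δ_f = max_{α ≠ 0} |Δ_f(α)| = 2^n. -/
import Mathlib


open Finset

/-- `(-1)^{f(x)}` as an integer, for functions on `Z_2^{m} × Z_2 ≅ Z_2^{m+1}`
(the second coordinate is the most significant bit). -/
def bhatP {m : ℕ} (f : (Fin m → ZMod 2) × ZMod 2 → ZMod 2)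
    (x : (Fin m → ZMod 2) × ZMod 2) : ℤ :=
  (-1) ^ (f x).val

/-- Autocorrelation `Δ_f(α)`. -/
def autocorrP {m : ℕ} (f : (Fin m → ZMod 2) × ZMod 2 → ZMod 2)
    (a : (Fin m → ZMod 2) × ZMod 2) : ℤ :=
  ∑ x : (Fin m → ZMod 2) × ZMod 2, bhatP f x * bhatP f (x + a)

/-- Hamming weight. -/
def wt {m : ℕ} (x' : Fin m → ZMod 2) : ℕ :=
  (Finset.univ.filter fun i => x' i = 1).card

lemma bhat_mul : ∀ a b : ZMod 2, ((-1:ℤ))^a.val * ((-1:ℤ))^b.val = ((-1:ℤ))^((a+b).val) := by decide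

theorem concat_linear_structure_absInd {m : ℕ} (hm : 1 ≤ m)
    (h : (Fin m → ZMod 2) → ZMod 2) (b : ZMod 2)
    (f : (Fin m → ZMod 2) × ZMod 2 → ZMod 2)
    (hf : ∀ (x' : Fin m → ZMod 2) (ε : ZMod 2),
      f (x', ε) = h x' + ε * ((∑ i, x' i) + b))
    (x' : Fin m → ZMod 2) (hx0 : x' ≠ 0) (c : ZMod 2)
    (hls : ∀ y', h y' + h (y' + x') = c) (hx : Even (wt x')) :
    (∃ c' : ZMod 2, ∀ y, f y + f (y + (x', 0)) = c') ∧
    (Finset.univ.erase (0 : (Fin m → ZMod 2) × ZMod 2)).sup'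
        ⟨(0, 1), by simp [Prod.ext_iff]⟩ (fun a => |autocorrP f a|) = 2 ^ (m + 1) := by
  have h2 : ∀ t : ZMod 2, t + t = 0 := by decide
  have hbool : ∀ a : ZMod 2, a = if a = 1 then 1 else 0 := by decide
  have hx'sum : (∑ i, x' i) = 0 := by
    have h1 : (∑ i, x' i) = ((wt x' : ℕ) : ZMod 2) := by
      rw [wt, ← Finset.sum_boole]
      exact Finset.sum_congr rfl fun i _ => hbool (x' i)
    rw [h1, ZMod.natCast_eq_zero_iff]
    exact hx.two_dvd
  have key : ∀ y : (Fin m → ZMod 2) × ZMod 2, f y + f (y + (x', 0)) = c := by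
    rintro ⟨y₁, y₂⟩
    have hadd : ((y₁, y₂) + (x', 0) : (Fin m → ZMod 2) × ZMod 2) = (y₁ + x', y₂) := by
      simp [Prod.ext_iff]
    rw [hadd, hf, hf]
    have hs : (∑ i, (y₁ + x') i) = ∑ i, y₁ i := by
      simp [Finset.sum_add_distrib, hx'sum]
    rw [hs]
    calc h y₁ + y₂ * ((∑ i, y₁ i) + b) + (h (y₁ + x') + y₂ * ((∑ i, y₁ i) + b))
        = (h y₁ + h (y₁ + x')) + (y₂ * ((∑ i, y₁ i) + b) + y₂ * ((∑ i, y₁ i) + b)) := by ring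
      _ = c := by rw [h2, add_zero, hls]
  have hcard : Fintype.card ((Fin m → ZMod 2) × ZMod 2) = 2 ^ (m + 1) := by
    simp [Fintype.card_prod, Fintype.card_fun, pow_succ]
  have habs : ∀ a : (Fin m → ZMod 2) × ZMod 2, |autocorrP f a| ≤ 2 ^ (m + 1) := by
    intro a
    calc |autocorrP f a| ≤ ∑ x : (Fin m → ZMod 2) × ZMod 2, |bhatP f x * bhatP f (x + a)| :=
          Finset.abs_sum_le_sum_abs _ _
      _ = ∑ _x : (Fin m → ZMod 2) × ZMod 2, (1 : ℤ) := by
          refine Finset.sum_congr rfl fun x _ => ?_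
          simp [bhatP, abs_mul, abs_pow]
      _ = 2 ^ (m + 1) := by
          rw [Finset.sum_const, Finset.card_univ, hcard]
          simp
  have hval : |autocorrP f (x', 0)| = 2 ^ (m + 1) := by
    have hsum : autocorrP f (x', 0) = ∑ _x : (Fin m → ZMod 2) × ZMod 2, ((-1:ℤ)) ^ c.val := by
      refine Finset.sum_congr rfl fun x _ => ?_
      rw [bhatP, bhatP, bhat_mul, key x]
    rw [hsum, Finset.sum_const, Finset.card_univ, hcard, nsmul_eq_mul, abs_mul, abs_pow]
    simp
  constructor
  · exact ⟨c, key⟩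
  · refine le_antisymm (Finset.sup'_le _ _ fun a _ => habs a) ?_
    have hmem : ((x', 0) : (Fin m → ZMod 2) × ZMod 2) ∈ Finset.univ.erase 0 := by
      simp [Prod.ext_iff, hx0]
    calc (2:ℤ) ^ (m + 1) = |autocorrP f (x', 0)| := hval.symm
      _ ≤ _ := Finset.le_sup' (fun a => |autocorrP f a|) hmem
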